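/- arXiv:1101.1681 — 4 statements merged into one kernel-verified Lean document; each statement's English description precedes it below -/
import Mathlib

section
/- Let a, b : ℝ → ℝ be continuous ω-periodic functions with positive averages A_ω(a) = (1/ω)∫₀^ω a(t)dt > 0 and A_ω(b) > 0, and with b(t) > 0. Then the scalar logistic equation v' = v(a(t) - b(t)v) has a positive ω-periodic solution v* given explicitly by v*(t) = exp(∫₀^t a(s)ds) · [∫₀^t b(s)exp(∫₀^s a(ν)dν)ds + c*]⁻¹ for a suitable constant c* > 0. -/
/-!
The substitution `u = 1/v` turns the logistic equation into the linear equation `u' = -a u + b`,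
so with `A(t) = ∫₀ᵗ a` and `B(t) = ∫₀ᵗ b e^A`, the function `v = e^A / (B + c)` solves it for
every constant `c`. Periodicity gives `A(t + ω) = A(t) + A(ω)` and, with `k = e^{A(ω)}`,
`B(t + ω) = B(ω) + k B(t)`; here `k > 1` because `a` has positive average. The constant
`c* = B(ω) / (k - 1)` is exactly the one for which `G = B + c*` satisfies `G(t + ω) = k G(t)`,
which makes `v` periodic. Finally `G > 0` on `[0, ∞)` because `b > 0`, and `G(t + ω) = k G(t)`
carries positivity to negative `t`.
-/

open Real Filter intervalIntegral

section
variable {ω k : ℝ}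

theorem integral_zero_add_of_add_eq_mul {g : ℝ → ℝ} (hg : Continuous g)
    (hgω : ∀ s, g (s + ω) = k * g s) (t : ℝ) :
    ∫ s in (0:ℝ)..t + ω, g s = (∫ s in (0:ℝ)..ω, g s) + k * ∫ s in (0:ℝ)..t, g s := by
  have hshift : ∫ s in ω..t + ω, g s = k * ∫ s in (0:ℝ)..t, g s := by
    simpa only [hgω, integral_const_mul, zero_add] using
      (integral_comp_add_right g ω (a := 0) (b := t)).symm
  rw [← integral_add_adjacent_intervals (hg.intervalIntegrable 0 ω) (hg.intervalIntegrable ω _),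
    hshift]

theorem pos_of_forall_add_eq_mul {f : ℝ → ℝ} (hω : 0 < ω) (hk : 0 < k)
    (hfω : ∀ t, f (t + ω) = k * f t) (hf : ∀ t, 0 ≤ t → 0 < f t) (t : ℝ) : 0 < f t := by
  have hshifted : ∀ n : ℕ, ∀ t, -(n * ω) ≤ t → 0 < f t := by
    intro n
    induction n with
    | zero => simpa using hf
    | succ n ih =>
      intro t ht
      have hpos := ih (t + ω) (by push_cast at ht; linarith)
      rw [hfω] at hpos
      exact pos_of_mul_pos_right hpos hk.le
  obtain ⟨n, hn⟩ := exists_nat_ge (-t / ω)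
  exact hshifted n t (by rw [div_le_iff₀ hω] at hn; linarith)

end

section
variable {a b A G : ℝ → ℝ}

theorem hasDerivAt_exp_mul_inv_of_logistic {t : ℝ}
    (hA : HasDerivAt A (a t) t) (hG : HasDerivAt G (b t * exp (A t)) t) (hGt : G t ≠ 0) :
    HasDerivAt (fun u => exp (A u) * (G u)⁻¹)
      (exp (A t) * (G t)⁻¹ * (a t - b t * (exp (A t) * (G t)⁻¹))) t := by
  refine (hA.exp.mul (hG.inv hGt)).congr_deriv ?_
  simp only [Pi.inv_apply]
  field_simp
  ring

theorem periodic_exp_mul_inv {ω : ℝ} (hA : ∀ t, A (t + ω) = A t + A ω)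
    (hG : ∀ t, G (t + ω) = exp (A ω) * G t) :
    Function.Periodic (fun t => exp (A t) * (G t)⁻¹) ω := by
  intro t
  simp only [hA, hG, exp_add, mul_inv]
  field_simp

end

theorem logistic_periodic_solution_exists_general
    (ω : ℝ) (hω : 0 < ω)
    (a b : ℝ → ℝ) (ha : Continuous a) (hb : Continuous b)
    (haper : ∀ t, a (t + ω) = a t) (hbper : ∀ t, b (t + ω) = b t)
    (hbpos : ∀ t, 0 < b t)
    (havg_a : 0 < (1 / ω) * ∫ t in (0:ℝ)..ω, a t) :
    ∃ cstar : ℝ, 0 < cstar ∧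
      (let vstar : ℝ → ℝ := fun t =>
        Real.exp (∫ s in (0:ℝ)..t, a s) *
          ((∫ s in (0:ℝ)..t, b s * Real.exp (∫ ν in (0:ℝ)..s, a ν)) + cstar)⁻¹
      (∀ t, 0 < vstar t) ∧ (∀ t, vstar (t + ω) = vstar t) ∧
        ∀ t, HasDerivAt vstar (vstar t * (a t - b t * vstar t)) t) := by
  set A : ℝ → ℝ := fun t => ∫ s in (0:ℝ)..t, a s
  set g : ℝ → ℝ := fun s => b s * exp (A s)
  set B : ℝ → ℝ := fun t => ∫ s in (0:ℝ)..t, g s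
  have hgc : Continuous g := hb.mul (continuous_primitive (ha.intervalIntegrable · ·) 0).rexp
  have hgpos : ∀ s, 0 < g s := fun s => mul_pos (hbpos s) (exp_pos _)
  have hA_add : ∀ t, A (t + ω) = A t + A ω := fun t => by
    simpa using Function.Periodic.intervalIntegral_add_eq_add haper 0 t (ha.intervalIntegrable · ·)
  have hk : 1 < exp (A ω) := one_lt_exp_iff.2 (pos_of_mul_pos_right havg_a (by positivity))
  have hB_add : ∀ t, B (t + ω) = B ω + exp (A ω) * B t :=
    integral_zero_add_of_add_eq_mul hgc fun s => by simp only [g, hbper, hA_add, exp_add]; ring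
  have hBω : 0 < B ω :=
    intervalIntegral_pos_of_pos_on (hgc.intervalIntegrable _ _) (fun x _ => hgpos x) hω
  have hc : 0 < B ω / (exp (A ω) - 1) := div_pos hBω (sub_pos.2 hk)
  set G : ℝ → ℝ := fun t => B t + B ω / (exp (A ω) - 1)
  have hG_add : ∀ t, G (t + ω) = exp (A ω) * G t := fun t => by
    simp only [G, hB_add]
    field_simp [(sub_pos.2 hk).ne']
    ring
  have hG_pos : ∀ t, 0 < G t := pos_of_forall_add_eq_mul hω (by positivity) hG_add
    fun t ht => add_pos_of_nonneg_of_pos (integral_nonneg ht fun x _ => (hgpos x).le) hc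
  exact ⟨_, hc, fun t => mul_pos (exp_pos _) (inv_pos.2 (hG_pos t)),
    periodic_exp_mul_inv hA_add hG_add, fun t => hasDerivAt_exp_mul_inv_of_logistic
      (ha.integral_hasStrictDerivAt 0 t).hasDerivAt
      ((hgc.integral_hasStrictDerivAt 0 t).hasDerivAt.add_const _) (hG_pos t).ne'⟩

/-- Existence of a positive ω-periodic solution of the scalar logistic
equation, given by the explicit formula. -/
theorem logistic_periodic_solution_exists
    (ω : ℝ) (hω : 0 < ω)
    (a b : ℝ → ℝ) (ha : Continuous a) (hb : Continuous b)
    (haper : ∀ t, a (t + ω) = a t) (hbper : ∀ t, b (t + ω) = b t)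
    (hbpos : ∀ t, 0 < b t)
    (havg_a : 0 < (1 / ω) * ∫ t in (0:ℝ)..ω, a t)
    (havg_b : 0 < (1 / ω) * ∫ t in (0:ℝ)..ω, b t) :
    ∃ cstar : ℝ, 0 < cstar ∧
      (let vstar : ℝ → ℝ := fun t =>
        Real.exp (∫ s in (0:ℝ)..t, a s) *
          ((∫ s in (0:ℝ)..t, b s * Real.exp (∫ ν in (0:ℝ)..s, a ν)) + cstar)⁻¹
      (∀ t, 0 < vstar t) ∧ (∀ t, vstar (t + ω) = vstar t) ∧
        ∀ t, HasDerivAt vstar (vstar t * (a t - b t * vstar t)) t) :=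
  logistic_periodic_solution_exists_general ω hω a b ha hb haper hbper hbpos havg_a
end

section
/- Let a, b : ℝ → ℝ be continuous ω-periodic with b(t) > 0 and A_ω(b) > 0. If v* is the positive ω-periodic solution of v' = v(a(t) - b(t)v) and v is any other positive solution, then |v(t) - v*(t)| → 0 as t → ∞; i.e., v* is globally asymptotically attractive among positive solutions. -/
/-!
The reciprocal `w = 1/v` of a positive solution of the logistic equation solves the linear
equation `w' = b - a w`, so the difference of two reciprocals decays like
`exp (-∫_{t₀}^t a)`. Integrating `(log v*)' = a - b v*` over a period shows `∫₀^ω a = ∫₀^ω b v* > 0`,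
hence that exponential tends to zero; since `v*` is bounded, `v - v*` then tends to zero as well.
-/

open Real Filter Topology

theorem hasDerivAt_inv_of_logistic {a b v : ℝ → ℝ} {t : ℝ}
    (hv : HasDerivAt v (v t * (a t - b t * v t)) t) (hv0 : v t ≠ 0) :
    HasDerivAt (fun s => (v s)⁻¹) (b t - a t * (v t)⁻¹) t :=
  (hv.inv hv0).congr_deriv (by field_simp; ring)

theorem eq_mul_exp_neg_integral_of_hasDerivAt {a u : ℝ → ℝ} {t₀ : ℝ} (ha : Continuous a)
    (hu : ∀ t, t₀ ≤ t → HasDerivAt u (-(a t * u t)) t) {t : ℝ} (ht : t₀ ≤ t) :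
    u t = u t₀ * exp (-∫ s in t₀..t, a s) := by
  set A : ℝ → ℝ := fun t => ∫ s in t₀..t, a s
  have hA (t : ℝ) : HasDerivAt A (a t) t :=
    intervalIntegral.integral_hasDerivAt_right (ha.intervalIntegrable _ _)
      (ha.stronglyMeasurableAtFilter _ _) ha.continuousAt
  have hderiv (s : ℝ) (hs : t₀ ≤ s) : HasDerivAt (fun s => u s * exp (A s)) 0 s :=
    ((hu s hs).mul (hA s).exp).congr_deriv (by ring)
  have hconst : u t * exp (A t) = u t₀ * exp (A t₀) :=
    constant_of_has_deriv_right_zero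
      (fun x hx => (hderiv x hx.1).continuousAt.continuousWithinAt)
      (fun x hx => (hderiv x hx.1).hasDerivWithinAt) t ⟨ht, le_rfl⟩
  have hA₀ : A t₀ = 0 := intervalIntegral.integral_same
  rw [hA₀, exp_zero, mul_one] at hconst
  rw [exp_neg, ← hconst, mul_inv_cancel_right₀ (exp_pos _).ne']

theorem intervalIntegral_pos_of_periodic_logistic {a b v : ℝ → ℝ} {ω : ℝ} (hω : 0 < ω)
    (ha : Continuous a) (hb : Continuous b) (hbpos : ∀ t, 0 < b t)
    (hvpos : ∀ t, 0 < v t) (hvper : Function.Periodic v ω)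
    (hv : ∀ t, HasDerivAt v (v t * (a t - b t * v t)) t) :
    0 < ∫ t in (0 : ℝ)..ω, a t := by
  have hvc : Continuous v := continuous_iff_continuousAt.2 fun t => (hv t).continuousAt
  have hlog (t : ℝ) : HasDerivAt (fun s => log (v s)) (a t - b t * v t) t :=
    ((hv t).log (hvpos t).ne').congr_deriv (by field_simp [(hvpos t).ne'])
  -- `log v` is periodic, so its derivative has zero mean.
  have hzero : ∫ t in (0 : ℝ)..ω, (a t - b t * v t) = 0 := by
    rw [intervalIntegral.integral_eq_sub_of_hasDerivAt (fun t _ => hlog t)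
      ((ha.sub (hb.mul hvc)).intervalIntegrable _ _), ← zero_add ω, hvper, sub_self]
  have hbv : 0 < ∫ t in (0 : ℝ)..ω, b t * v t :=
    intervalIntegral.intervalIntegral_pos_of_pos_on ((hb.mul hvc).intervalIntegrable _ _)
      (fun t _ => mul_pos (hbpos t) (hvpos t)) hω
  rw [intervalIntegral.integral_sub (g := fun t => b t * v t) (ha.intervalIntegrable _ _)
    ((hb.mul hvc).intervalIntegrable _ _)] at hzero
  linarith

theorem Function.Periodic.tendsto_atTop_intervalIntegral_of_pos_from {a : ℝ → ℝ} {ω : ℝ}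
    (haper : Function.Periodic a ω) (hω : 0 < ω) (h₀ : 0 < ∫ t in (0 : ℝ)..ω, a t) (t₀ : ℝ) :
    Tendsto (fun t => ∫ s in t₀..t, a s) atTop atTop := by
  have hint := haper.intervalIntegrable₀ hω.ne'
    (intervalIntegral.intervalIntegrable_of_integral_ne_zero h₀.ne')
  refine tendsto_atTop_add_const_right _ (-∫ s in (0 : ℝ)..t₀, a s)
    (haper.tendsto_atTop_intervalIntegral_of_pos h₀ hω) |>.congr fun t => ?_
  rw [← intervalIntegral.integral_interval_sub_left (hint 0 t) (hint 0 t₀), sub_eq_add_neg]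

theorem tendsto_sub_of_tendsto_inv_sub {α : Type*} {l : Filter α} {f g : α → ℝ} {M : ℝ}
    (hM : 0 < M) (hf : ∀ᶠ x in l, 0 < f x) (hg : ∀ x, 0 < g x) (hgM : ∀ x, g x ≤ M)
    (h : Tendsto (fun x => (f x)⁻¹ - (g x)⁻¹) l (𝓝 0)) :
    Tendsto (fun x => f x - g x) l (𝓝 0) := by
  have hclose : ∀ᶠ x in l, |(f x)⁻¹ - (g x)⁻¹| < (2 * M)⁻¹ :=
    (tendsto_zero_iff_abs_tendsto_zero _).1 h |>.eventually (gt_mem_nhds (by positivity))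
  have hfM : ∀ᶠ x in l, f x ≤ 2 * M := by
    filter_upwards [hf, hclose] with x hfx hx
    have hgx : M⁻¹ ≤ (g x)⁻¹ := inv_anti₀ (hg x) (hgM x)
    have hhalf : M⁻¹ - (2 * M)⁻¹ = (2 * M)⁻¹ := by field_simp; ring
    have hfx' : (2 * M)⁻¹ ≤ (f x)⁻¹ := by linarith [neg_abs_le ((f x)⁻¹ - (g x)⁻¹)]
    simpa using inv_anti₀ (by positivity) hfx'
  have hbdd : IsBoundedUnder (· ≤ ·) l (fun x => ‖f x * g x‖) := by
    refine isBoundedUnder_of_eventually_le (a := 2 * M * M) ?_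
    filter_upwards [hf, hfM] with x hfx hfxM
    rw [norm_of_nonneg (mul_pos hfx (hg x)).le]
    exact mul_le_mul hfxM (hgM x) (hg x).le (by positivity)
  refine ((neg_zero (G := ℝ) ▸ h.neg).zero_mul_isBoundedUnder_le hbdd).congr' ?_
  filter_upwards [hf] with x hfx
  field_simp [hfx.ne', (hg x).ne']
  ring

theorem logistic_periodic_solution_globally_attractive_general
    (ω t₀ : ℝ) (hω : 0 < ω)
    (a b : ℝ → ℝ) (ha : Continuous a) (hb : Continuous b)
    (haper : ∀ t, a (t + ω) = a t)
    (hbpos : ∀ t, 0 < b t)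
    (vstar : ℝ → ℝ)
    (hvstar_pos : ∀ t, 0 < vstar t)
    (hvstar_per : ∀ t, vstar (t + ω) = vstar t)
    (hvstar_sol : ∀ t, HasDerivAt vstar (vstar t * (a t - b t * vstar t)) t)
    (v : ℝ → ℝ)
    (hv_pos : ∀ t, t₀ ≤ t → 0 < v t)
    (hv_sol : ∀ t, t₀ ≤ t → HasDerivAt v (v t * (a t - b t * v t)) t) :
    Tendsto (fun t => |v t - vstar t|) atTop (nhds 0) := by
  have hvstar_cont : Continuous vstar :=
    continuous_iff_continuousAt.2 fun t => (hvstar_sol t).continuousAt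
  obtain ⟨M, hM⟩ := (Function.Periodic.compact_of_continuous hvstar_per hω.ne'
    hvstar_cont).bddAbove
  have hvstar_le (t : ℝ) : vstar t ≤ M := hM ⟨t, rfl⟩
  have hA := Function.Periodic.tendsto_atTop_intervalIntegral_of_pos_from haper hω
    (intervalIntegral_pos_of_periodic_logistic hω ha hb hbpos hvstar_pos hvstar_per hvstar_sol) t₀
  have hrecip (t : ℝ) (ht : t₀ ≤ t) : (v t)⁻¹ - (vstar t)⁻¹
      = ((v t₀)⁻¹ - (vstar t₀)⁻¹) * exp (-∫ s in t₀..t, a s) := by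
    refine eq_mul_exp_neg_integral_of_hasDerivAt (u := fun t => (v t)⁻¹ - (vstar t)⁻¹) ha
      (fun s hs => ?_) ht
    refine ((hasDerivAt_inv_of_logistic (hv_sol s hs) (hv_pos s hs).ne').sub
      (hasDerivAt_inv_of_logistic (hvstar_sol s) (hvstar_pos s).ne')).congr_deriv ?_
    ring
  have hrecip_tendsto : Tendsto (fun t => (v t)⁻¹ - (vstar t)⁻¹) atTop (𝓝 0) := by
    have := (tendsto_exp_atBot.comp (tendsto_neg_atTop_atBot.comp hA)).const_mul
      ((v t₀)⁻¹ - (vstar t₀)⁻¹)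
    rw [mul_zero] at this
    exact this.congr' <| (eventually_ge_atTop t₀).mono fun t ht => (hrecip t ht).symm
  simpa using (tendsto_sub_of_tendsto_inv_sub ((hvstar_pos 0).trans_le (hvstar_le 0))
    (eventually_ge_atTop t₀ |>.mono hv_pos) hvstar_pos hvstar_le hrecip_tendsto).abs

/-- Global asymptotic attractivity of the positive ω-periodic solution of the
logistic equation among positive solutions. -/
theorem logistic_periodic_solution_globally_attractive
    (ω t₀ : ℝ) (hω : 0 < ω)
    (a b : ℝ → ℝ) (ha : Continuous a) (hb : Continuous b)
    (haper : ∀ t, a (t + ω) = a t) (hbper : ∀ t, b (t + ω) = b t)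
    (hbpos : ∀ t, 0 < b t)
    (havg_b : 0 < (1 / ω) * ∫ t in (0:ℝ)..ω, b t)
    (vstar : ℝ → ℝ)
    (hvstar_pos : ∀ t, 0 < vstar t)
    (hvstar_per : ∀ t, vstar (t + ω) = vstar t)
    (hvstar_sol : ∀ t, HasDerivAt vstar (vstar t * (a t - b t * vstar t)) t)
    (v : ℝ → ℝ)
    (hv_pos : ∀ t, t₀ ≤ t → 0 < v t)
    (hv_sol : ∀ t, t₀ ≤ t → HasDerivAt v (v t * (a t - b t * v t)) t) :
    Tendsto (fun t => |v t - vstar t|) atTop (nhds 0) :=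
  logistic_periodic_solution_globally_attractive_general ω t₀ hω a b ha hb haper hbpos vstar
    hvstar_pos hvstar_per hvstar_sol v hv_pos hv_sol
end

section
/- Let W(t) = |ln v(t) - ln v*(t)| where v and v* are two positive solutions of v' = v(a(t) - b(t)v). Then the upper right Dini derivative of W along solutions satisfies D⁺W(t) = -b(t)|v(t) - v*(t)| ≤ 0. -/
open Real Filter

/-- The upper right Dini derivative. -/
noncomputable def diniUpper (f : ℝ → ℝ) (t : ℝ) : ℝ :=
  Filter.limsup (fun h : ℝ => (f (t + h) - f t) / h) (nhdsWithin 0 (Set.Ioi 0))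

/-
The Lyapunov function W = |log v - log v*| is in fact differentiable along the two solutions:
log v - log v* has derivative -b (v - v*), whose sign agrees with that of log v - log v*, so the
absolute value contributes the factor sign (v - v*) and turns -b (v - v*) into -b |v - v*|.
At a crossing v = v* both the function and its derivative vanish, and |·| of such a function
still has derivative 0. The Dini derivative of a differentiable function is its derivative.
-/

lemma diniUpper_eq_of_hasDerivAt {f : ℝ → ℝ} {f' t : ℝ} (hf : HasDerivAt f f' t) :
    diniUpper f t = f' :=
  (hf.tendsto_slope_zero_right.congr fun h => by simp [div_eq_inv_mul]).limsup_eq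

lemma HasDerivAt.abs_of_eq_zero {f : ℝ → ℝ} {x : ℝ} (hf : HasDerivAt f 0 x) (h₀ : f x = 0) :
    HasDerivAt (fun y => |f y|) 0 x := by
  rw [hasDerivAt_iff_isLittleO] at hf ⊢
  simpa [h₀] using Asymptotics.isLittleO_abs_left.2 (by simpa [h₀] using hf)

lemma HasDerivAt.abs_of_sign_eq {f : ℝ → ℝ} {c d x : ℝ} (hf : HasDerivAt f (c * d) x)
    (hsign : SignType.sign (f x) = SignType.sign d) :
    HasDerivAt (fun y => |f y|) (c * |d|) x := by
  by_cases hfx : f x = 0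
  · have hd : d = 0 := by simpa [hfx, eq_comm (a := (0 : SignType))] using hsign
    rw [hd, mul_zero] at hf
    simpa [hd] using hf.abs_of_eq_zero hfx
  · have h := (hasDerivAt_abs hfx).comp x hf
    rwa [hsign, mul_left_comm, sign_mul_self] at h

lemma sign_log_sub_log {x y : ℝ} (hx : 0 < x) (hy : 0 < y) :
    SignType.sign (log x - log y) = SignType.sign (x - y) := by
  rcases lt_trichotomy x y with hxy | rfl | hxy
  · rw [sign_neg (sub_neg.2 (log_lt_log hx hxy)), sign_neg (sub_neg.2 hxy)]
  · simp
  · rw [sign_pos (sub_pos.2 (log_lt_log hy hxy)), sign_pos (sub_pos.2 hxy)]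

lemma HasDerivAt.log_of_self_mul {v : ℝ → ℝ} {r t : ℝ} (hv : HasDerivAt v (v t * r) t)
    (hpos : v t ≠ 0) : HasDerivAt (fun s => Real.log (v s)) r t := by
  simpa [mul_div_cancel_left₀ r hpos] using hv.log hpos

theorem lyapunov_dini_derivative_general
    (a b : ℝ → ℝ)
    (hbpos : ∀ t, 0 < b t)
    (v vstar : ℝ → ℝ)
    (hv_pos : ∀ t, 0 < v t) (hvstar_pos : ∀ t, 0 < vstar t)
    (hv_sol : ∀ t, HasDerivAt v (v t * (a t - b t * v t)) t)
    (hvstar_sol : ∀ t, HasDerivAt vstar (vstar t * (a t - b t * vstar t)) t) :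
    ∀ t, diniUpper (fun s => |Real.log (v s) - Real.log (vstar s)|) t
          = -(b t) * |v t - vstar t| ∧
        diniUpper (fun s => |Real.log (v s) - Real.log (vstar s)|) t ≤ 0 := by
  intro t
  have hlog : HasDerivAt (fun s => log (v s) - log (vstar s)) (-(b t) * (v t - vstar t)) t :=
    (((hv_sol t).log_of_self_mul (hv_pos t).ne').sub
      ((hvstar_sol t).log_of_self_mul (hvstar_pos t).ne')).congr_deriv (by ring)
  have hW := hlog.abs_of_sign_eq (sign_log_sub_log (hv_pos t) (hvstar_pos t))
  rw [diniUpper_eq_of_hasDerivAt hW]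
  exact ⟨rfl, mul_nonpos_of_nonpos_of_nonneg (neg_nonpos.2 (hbpos t).le) (abs_nonneg _)⟩

/-- Along two positive solutions of the logistic equation, the Lyapunov
function W(t) = |ln v(t) - ln v*(t)| has Dini derivative -b(t)|v(t)-v*(t)| ≤ 0. -/
theorem lyapunov_dini_derivative
    (a b : ℝ → ℝ) (ha : Continuous a) (hb : Continuous b)
    (hbpos : ∀ t, 0 < b t)
    (v vstar : ℝ → ℝ)
    (hv_pos : ∀ t, 0 < v t) (hvstar_pos : ∀ t, 0 < vstar t)
    (hv_sol : ∀ t, HasDerivAt v (v t * (a t - b t * v t)) t)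
    (hvstar_sol : ∀ t, HasDerivAt vstar (vstar t * (a t - b t * vstar t)) t) :
    ∀ t, diniUpper (fun s => |Real.log (v s) - Real.log (vstar s)|) t
          = -(b t) * |v t - vstar t| ∧
        diniUpper (fun s => |Real.log (v s) - Real.log (vstar s)|) t ≤ 0 :=
  lyapunov_dini_derivative_general a b hbpos v vstar hv_pos hvstar_pos hv_sol hvstar_sol
end

section
/- Suppose for the Owen-Smith system the averaged net growth condition fails: A_ω(-R + α(v* - ρ)/(β + v*) - γβ/(v* - ρ)) ≤ 0, where v* is the positive ω-periodic solution of the logistic equation v' = v(a - bv). Then every positive solution satisfies h(t) → 0 as t → ∞, i.e., the herbivore goes extinct, and in particular the system is not permanent. -/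
open Real Filter

/-- A positive solution of the Owen-Smith system. -/
def OwenSmithSolution (a b c α β γ ρ R : ℝ → ℝ) (v h : ℝ → ℝ) : Prop :=
  (∀ t, HasDerivAt v
    (v t * (a t - b t * v t) - c t * ((v t - ρ t) / (β t + v t)) * h t) t) ∧
  (∀ t, HasDerivAt h
    (h t * (α t * (v t - ρ t) / (β t + v t) - R t
      - γ t * (β t + v t) / (v t - ρ t))) t) ∧
  (∀ t, ρ t < v t) ∧ (∀ t, 0 < h t)

/-- Permanence of the Owen-Smith system. -/
def OwenSmithPermanent (a b c α β γ ρ R : ℝ → ℝ) : Prop :=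
  ∃ δ Δ : ℝ, 0 < δ ∧ δ < Δ ∧ ∀ v h : ℝ → ℝ,
    OwenSmithSolution a b c α β γ ρ R v h →
      δ ≤ liminf v atTop ∧ δ ≤ liminf h atTop ∧
      limsup v atTop ≤ Δ ∧ limsup h atTop ≤ Δ


/-!
Along the periodic logistic solution `v*`, the herbivore's per-capita growth rate is the
integrand of the averaged condition minus `γ v* / (v* - ρ) > 0`, so its mean over a period is
strictly negative, and by continuity it stays negative when `v*` is replaced by `v* e^η` for a
small `η > 0`. Grazing only slows the vegetation down, so comparing `log v` with `log v*` shows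
that eventually `v ≤ v* e^η`; as the growth rate is increasing in `v`, `log h` is then eventually
dominated by the primitive of a periodic function with negative mean, and `h → 0`. A solution
with `h → 0` rules out permanence.
-/

open Set Topology Function

theorem Function.Periodic.exists_pos_forall_le {f : ℝ → ℝ} {c : ℝ} (hp : Periodic f c)
    (hc : c ≠ 0) (hf : Continuous f) (hpos : ∀ t, 0 < f t) : ∃ m, 0 < m ∧ ∀ t, m ≤ f t := by
  obtain ⟨_, ⟨t₀, rfl⟩, hmin⟩ := (hp.compact_of_continuous hc hf).exists_isLeast (range_nonempty f)
  exact ⟨f t₀, hpos t₀, fun t => hmin ⟨t, rfl⟩⟩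

theorem eventually_le_of_deriv_le_neg {u u' : ℝ → ℝ} {ε κ : ℝ}
    (hu : ∀ t, HasDerivAt u (u' t) t) (hκ : 0 < κ) (hd : ∀ t, ε ≤ u t → u' t ≤ -κ) :
    ∀ᶠ t in atTop, u t ≤ ε := by
  obtain ⟨t₀, ht₀⟩ : ∃ t₀, u t₀ ≤ ε := by
    by_contra! hgt
    have hdecay := image_sub_le_mul_sub_of_deriv_le (fun t => (hu t).differentiableAt)
      (fun t => ((hu t).deriv).trans_le (hd t (hgt t).le))
      (div_nonneg (sub_nonneg.2 (hgt 0).le) hκ.le)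
    have hlast := hgt ((u 0 - ε) / κ)
    rw [sub_zero, neg_mul, mul_div_cancel₀ _ hκ.ne'] at hdecay
    linarith
  filter_upwards [eventually_ge_atTop t₀] with t ht
  exact image_le_of_deriv_right_lt_deriv_boundary (B := fun _ => ε) (B' := 0)
    (fun x _ => (hu x).continuousAt.continuousWithinAt) (fun x _ => (hu x).hasDerivWithinAt) ht₀
    (fun _ => hasDerivAt_const _ _) (fun x _ hx => (hd x hx.ge).trans_lt (neg_lt_zero.2 hκ))
    ⟨ht, le_rfl⟩

theorem Function.Periodic.tendsto_intervalIntegral_atBot_of_neg {g : ℝ → ℝ} {T : ℝ}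
    (hg : Periodic g T) (h₀ : ∫ x in 0..T, g x < 0) (hT : 0 < T) :
    Tendsto (fun t => ∫ x in 0..t, g x) atTop atBot := by
  have hneg : Periodic (fun x => -g x) T := fun x => by simp only [hg x]
  have := hneg.tendsto_atTop_intervalIntegral_of_pos
    (by rwa [intervalIntegral.integral_neg, neg_pos]) hT
  exact (tendsto_neg_atTop_atBot.comp this).congr fun t => by
    simp only [comp_apply, intervalIntegral.integral_neg, neg_neg]

theorem tendsto_zero_of_hasDerivAt_mul_of_eventually_le {y g φ : ℝ → ℝ} {T : ℝ}
    (hy : ∀ t, HasDerivAt y (y t * g t) t) (hpos : ∀ t, 0 < y t) (hφ : Continuous φ)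
    (hper : Periodic φ T) (hT : 0 < T) (hneg : ∫ x in 0..T, φ x < 0)
    (hle : ∀ᶠ t in atTop, g t ≤ φ t) : Tendsto y atTop (𝓝 0) := by
  obtain ⟨t₀, ht₀⟩ := eventually_atTop.1 hle
  have hlog : ∀ t, HasDerivAt (fun s => log (y s)) (g t) t := fun t => by
    simpa only [mul_div_cancel_left₀ _ (hpos t).ne'] using (hy t).log (hpos t).ne'
  set C := log (y t₀) - ∫ x in 0..t₀, φ x
  have hbound : ∀ t ≥ t₀, log (y t) ≤ C + ∫ x in 0..t, φ x := by
    intro t ht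
    have := intervalIntegral.sub_le_integral_of_hasDeriv_right_of_le ht
      (fun x _ => (hlog x).continuousAt.continuousWithinAt) (fun x _ => (hlog x).hasDerivWithinAt)
      hφ.integrableOn_Icc (fun x hx => ht₀ x hx.1.le)
    rw [← intervalIntegral.integral_interval_sub_left (hφ.intervalIntegrable 0 t)
      (hφ.intervalIntegrable 0 t₀)] at this
    linarith
  have hlog_bot : Tendsto (fun t => log (y t)) atTop atBot :=
    tendsto_atBot_mono' atTop (eventually_atTop.2 ⟨t₀, hbound⟩)
      (tendsto_atBot_add_const_left _ C (hper.tendsto_intervalIntegral_atBot_of_neg hneg hT))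
  exact (tendsto_exp_atBot.comp hlog_bot).congr fun t => exp_log (hpos t)

theorem eventually_le_mul_exp_of_logistic {a b v v' w : ℝ → ℝ} {b₀ w₀ ε : ℝ}
    (hv : ∀ t, HasDerivAt v (v' t) t) (hv' : ∀ t, v' t ≤ v t * (a t - b t * v t))
    (hw : ∀ t, HasDerivAt w (w t * (a t - b t * w t)) t) (hvpos : ∀ t, 0 < v t)
    (hb₀ : 0 < b₀) (hb : ∀ t, b₀ ≤ b t) (hw₀ : 0 < w₀) (hw₀w : ∀ t, w₀ ≤ w t) (hε : 0 < ε) :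
    ∀ᶠ t in atTop, v t ≤ w t * exp ε := by
  have hwpos t : 0 < w t := hw₀.trans_le (hw₀w t)
  have hu t : HasDerivAt (fun s => log (v s) - log (w s))
      (v' t / v t - w t * (a t - b t * w t) / w t) t :=
    ((hv t).log (hvpos t).ne').sub ((hw t).log (hwpos t).ne')
  have hgap₀ : 0 < w₀ * (exp ε - 1) := mul_pos hw₀ (by linarith [add_one_lt_exp hε.ne'])
  have hdecay t (hεu : ε ≤ log (v t) - log (w t)) :
      v' t / v t - w t * (a t - b t * w t) / w t ≤ -(b₀ * (w₀ * (exp ε - 1))) := by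
    rw [← log_div (hvpos t).ne' (hwpos t).ne', le_log_iff_exp_le (div_pos (hvpos t) (hwpos t)),
      le_div_iff₀ (hwpos t)] at hεu
    have hgap : w₀ * (exp ε - 1) ≤ v t - w t := by nlinarith [hw₀w t, add_one_lt_exp hε.ne']
    have hlogistic : v' t / v t ≤ a t - b t * v t :=
      (div_le_iff₀ (hvpos t)).2 (by linarith [hv' t])
    rw [mul_div_cancel_left₀ _ (hwpos t).ne']
    have := mul_le_mul (hb t) hgap hgap₀.le (hb₀.le.trans (hb t))
    linarith
  filter_upwards [eventually_le_of_deriv_le_neg hu (mul_pos hb₀ hgap₀) hdecay] with t ht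
  rwa [← log_div (hvpos t).ne' (hwpos t).ne', log_le_iff_le_exp (div_pos (hvpos t) (hwpos t)),
    div_le_iff₀' (hwpos t)] at ht

/-- Along a solution, `h' = h * herbivoreGrowthRate α β γ ρ R t (v t)`. -/
noncomputable def herbivoreGrowthRate (α β γ ρ R : ℝ → ℝ) (t x : ℝ) : ℝ :=
  α t * (x - ρ t) / (β t + x) - R t - γ t * (β t + x) / (x - ρ t)

section GrowthRate

variable {α β γ ρ R : ℝ → ℝ}

theorem herbivoreGrowthRate_monotoneOn {t : ℝ} (hα : 0 ≤ α t) (hγ : 0 ≤ γ t)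
    (hβρ : 0 < β t + ρ t) : MonotoneOn (herbivoreGrowthRate α β γ ρ R t) (Ioi (ρ t)) := by
  have hsplit : ∀ x ∈ Ioi (ρ t), herbivoreGrowthRate α β γ ρ R t x =
      α t - R t - γ t - (β t + ρ t) * (α t / (β t + x) + γ t / (x - ρ t)) := by
    intro x (hx : ρ t < x)
    have : β t + x ≠ 0 := by linarith
    have : x - ρ t ≠ 0 := by linarith
    simp only [herbivoreGrowthRate]
    field_simp
    ring
  intro x (hx : ρ t < x) y hy hxy
  rw [hsplit x hx, hsplit y hy]
  have : 0 < x - ρ t := by linarith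
  have : 0 < β t + x := by linarith
  gcongr

theorem Continuous.herbivoreGrowthRate {X : Type*} [TopologicalSpace X] (hα : Continuous α)
    (hβ : Continuous β) (hγ : Continuous γ) (hρ : Continuous ρ) (hR : Continuous R)
    {τ x : X → ℝ} (hτ : Continuous τ) (hx : Continuous x) (hβx : ∀ p, β (τ p) + x p ≠ 0)
    (hxρ : ∀ p, x p - ρ (τ p) ≠ 0) :
    Continuous fun p => herbivoreGrowthRate α β γ ρ R (τ p) (x p) :=
  ((((hα.comp hτ).mul (hx.sub (hρ.comp hτ))).div ((hβ.comp hτ).add hx) hβx).sub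
    (hR.comp hτ)).sub (((hγ.comp hτ).mul ((hβ.comp hτ).add hx)).div (hx.sub (hρ.comp hτ)) hxρ)

theorem exists_integral_herbivoreGrowthRate_neg {ω : ℝ} (hω : 0 < ω) {w : ℝ → ℝ}
    (hα : Continuous α) (hβ : Continuous β) (hγ : Continuous γ) (hρ : Continuous ρ)
    (hR : Continuous R) (hw : Continuous w) (hβpos : ∀ t, 0 < β t) (hγpos : ∀ t, 0 < γ t)
    (hwpos : ∀ t, 0 < w t) (hρw : ∀ t, ρ t < w t)
    (havg : ∫ t in 0..ω, (-R t + α t * (w t - ρ t) / (β t + w t) - γ t * β t / (w t - ρ t)) ≤ 0) :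
    ∃ η > 0, ∫ t in 0..ω, herbivoreGrowthRate α β γ ρ R t (w t * exp η) < 0 := by
  have hgrow (η t : ℝ) : w t ≤ w t * exp |η| :=
    le_mul_of_one_le_right (hwpos t).le (one_le_exp (abs_nonneg η))
  -- `|η|` keeps the argument above `ρ` for every `η`, so `F` is jointly continuous on `ℝ × ℝ`.
  set F := fun η t => herbivoreGrowthRate α β γ ρ R t (w t * exp |η|)
  have hF : Continuous (uncurry F) :=
    hα.herbivoreGrowthRate hβ hγ hρ hR continuous_snd (by fun_prop)
      (fun p => (add_pos (hβpos p.2) ((hwpos p.2).trans_le (hgrow p.1 p.2))).ne')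
      (fun p => (sub_pos.2 ((hρw p.2).trans_le (hgrow p.1 p.2))).ne')
  have hlt t : F 0 t < -R t + α t * (w t - ρ t) / (β t + w t) - γ t * β t / (w t - ρ t) := by
    have hwρ : 0 < w t - ρ t := sub_pos.2 (hρw t)
    have hrate : F 0 t = -R t + α t * (w t - ρ t) / (β t + w t) - γ t * β t / (w t - ρ t)
        - γ t * w t / (w t - ρ t) := by
      simp only [F, herbivoreGrowthRate, abs_zero, exp_zero, mul_one]
      field_simp
      ring
    have hgap : 0 < γ t * w t / (w t - ρ t) := div_pos (mul_pos (hγpos t) (hwpos t)) hwρ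
    linarith
  have h0 : ∫ t in 0..ω, F 0 t < 0 := by
    refine (intervalIntegral.integral_lt_integral_of_continuousOn_of_le_of_exists_lt hω
      (hF.comp (Continuous.prodMk_right 0)).continuousOn ?_ (fun t _ => (hlt t).le)
      ⟨0, left_mem_Icc.2 hω.le, hlt 0⟩).trans_le havg
    have hne t : w t - ρ t ≠ 0 := (sub_pos.2 (hρw t)).ne'
    have hne' t : β t + w t ≠ 0 := (add_pos (hβpos t) (hwpos t)).ne'
    fun_prop (disch := assumption)
  have hnear : ∀ᶠ η in 𝓝[>] 0, ∫ t in 0..ω, F η t < 0 :=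
    ((intervalIntegral.continuous_parametric_intervalIntegral_of_continuous' hF 0 ω).tendsto 0
      |>.eventually_lt_const h0).filter_mono nhdsWithin_le_nhds
  obtain ⟨η, hneg, hη⟩ := (hnear.and self_mem_nhdsWithin).exists
  exact ⟨η, hη, by simpa only [F, abs_of_pos hη] using hneg⟩

end GrowthRate

theorem OwenSmithSolution.tendsto_herbivore_zero {ω : ℝ} (hω : 0 < ω)
    {a b c α β γ ρ R vstar v h : ℝ → ℝ}
    (hb : Continuous b) (hα : Continuous α) (hβ : Continuous β) (hγ : Continuous γ)
    (hρ : Continuous ρ) (hR : Continuous R)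
    (hbpos : ∀ t, 0 < b t) (hc₀ : ∀ t, 0 ≤ c t) (hα₀ : ∀ t, 0 ≤ α t) (hβpos : ∀ t, 0 < β t)
    (hγpos : ∀ t, 0 < γ t) (hρpos : ∀ t, 0 < ρ t)
    (hbper : Periodic b ω) (hαper : Periodic α ω) (hβper : Periodic β ω) (hγper : Periodic γ ω)
    (hρper : Periodic ρ ω) (hRper : Periodic R ω)
    (hvstar_pos : ∀ t, 0 < vstar t) (hvstar_per : Periodic vstar ω)
    (hvstar_sol : ∀ t, HasDerivAt vstar (vstar t * (a t - b t * vstar t)) t)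
    (hvstar_dom : ∀ t, ρ t < vstar t)
    (havg : ∫ t in 0..ω,
      (-R t + α t * (vstar t - ρ t) / (β t + vstar t) - γ t * β t / (vstar t - ρ t)) ≤ 0)
    (sol : OwenSmithSolution a b c α β γ ρ R v h) :
    Tendsto h atTop (𝓝 0) := by
  obtain ⟨hv, hh, hρv, hhpos⟩ := sol
  have hvstar : Continuous vstar :=
    continuous_iff_continuousAt.2 fun t => (hvstar_sol t).continuousAt
  have hvpos t : 0 < v t := (hρpos t).trans (hρv t)
  obtain ⟨η, hη, hneg⟩ := exists_integral_herbivoreGrowthRate_neg hω hα hβ hγ hρ hR hvstar hβpos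
    hγpos hvstar_pos hvstar_dom havg
  obtain ⟨b₀, hb₀, hb₀b⟩ := hbper.exists_pos_forall_le hω.ne' hb hbpos
  obtain ⟨w₀, hw₀, hw₀w⟩ := hvstar_per.exists_pos_forall_le hω.ne' hvstar hvstar_pos
  have hgrazing t : 0 ≤ c t * ((v t - ρ t) / (β t + v t)) * h t :=
    mul_nonneg (mul_nonneg (hc₀ t) (div_nonneg (sub_pos.2 (hρv t)).le
      (add_pos (hβpos t) (hvpos t)).le)) (hhpos t).le
  have hvle := eventually_le_mul_exp_of_logistic hv (fun t => sub_le_self _ (hgrazing t))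
    hvstar_sol hvpos hb₀ hb₀b hw₀ hw₀w hη
  have hρ_lt t : ρ t < vstar t * exp η :=
    (hvstar_dom t).trans_le (le_mul_of_one_le_right (hvstar_pos t).le (one_le_exp hη.le))
  refine tendsto_zero_of_hasDerivAt_mul_of_eventually_le hh hhpos
    (hα.herbivoreGrowthRate hβ hγ hρ hR continuous_id (by fun_prop)
      (fun t => (add_pos (hβpos t) ((hρpos t).trans (hρ_lt t))).ne')
      (fun t => (sub_pos.2 (hρ_lt t)).ne'))
    (fun t => by simp only [herbivoreGrowthRate, id, hαper t, hβper t, hγper t, hρper t, hRper t,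
      hvstar_per t])
    hω hneg ?_
  filter_upwards [hvle] with t ht
  exact herbivoreGrowthRate_monotoneOn (hα₀ t) (hγpos t).le (add_pos (hβpos t) (hρpos t))
    (hρv t) (hρ_lt t) ht

theorem not_owenSmithPermanent_of_tendsto_zero {a b c α β γ ρ R v h : ℝ → ℝ}
    (sol : OwenSmithSolution a b c α β γ ρ R v h) (hh : Tendsto h atTop (𝓝 0)) :
    ¬ OwenSmithPermanent a b c α β γ ρ R := by
  rintro ⟨δ, Δ, hδ, -, hperm⟩
  have := (hperm v h sol).2.1
  rw [hh.liminf_eq] at this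
  linarith

theorem herbivore_extinction_general
    (ω : ℝ) (hω : 0 < ω)
    (a b c α β γ ρ R : ℝ → ℝ)
    (hb : Continuous b)
    (hα : Continuous α) (hβ : Continuous β) (hγ : Continuous γ)
    (hρ : Continuous ρ) (hR : Continuous R)
    (hbpos : ∀ t, 0 < b t) (hcpos : ∀ t, 0 < c t)
    (hαpos : ∀ t, 0 < α t) (hβpos : ∀ t, 0 < β t) (hγpos : ∀ t, 0 < γ t)
    (hρpos : ∀ t, 0 < ρ t)
    (hbper : ∀ t, b (t + ω) = b t)
    (hαper : ∀ t, α (t + ω) = α t)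
    (hβper : ∀ t, β (t + ω) = β t) (hγper : ∀ t, γ (t + ω) = γ t)
    (hρper : ∀ t, ρ (t + ω) = ρ t) (hRper : ∀ t, R (t + ω) = R t)
    (vstar : ℝ → ℝ)
    (hvstar_pos : ∀ t, 0 < vstar t)
    (hvstar_per : ∀ t, vstar (t + ω) = vstar t)
    (hvstar_sol : ∀ t, HasDerivAt vstar (vstar t * (a t - b t * vstar t)) t)
    (hvstar_dom : ∀ t, ρ t < vstar t)
    (hex : ∃ v h : ℝ → ℝ, OwenSmithSolution a b c α β γ ρ R v h)
    (havg : (1 / ω) * (∫ t in (0:ℝ)..ω,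
      (-R t + α t * (vstar t - ρ t) / (β t + vstar t)
        - γ t * β t / (vstar t - ρ t))) ≤ 0) :
    (∀ v h : ℝ → ℝ, OwenSmithSolution a b c α β γ ρ R v h →
      Tendsto h atTop (nhds 0)) ∧
    ¬ OwenSmithPermanent a b c α β γ ρ R := by
  have hint := nonpos_of_mul_nonpos_right havg (one_div_pos.2 hω)
  have extinction v h (sol : OwenSmithSolution a b c α β γ ρ R v h) : Tendsto h atTop (𝓝 0) :=
    sol.tendsto_herbivore_zero hω hb hα hβ hγ hρ hR hbpos (fun t => (hcpos t).le)
      (fun t => (hαpos t).le) hβpos hγpos hρpos hbper hαper hβper hγper hρper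
      hRper hvstar_pos hvstar_per hvstar_sol hvstar_dom hint
  obtain ⟨v, h, sol⟩ := hex
  exact ⟨extinction, not_owenSmithPermanent_of_tendsto_zero sol (extinction v h sol)⟩

/-- If the averaged net growth condition fails, the herbivore goes extinct
and the system is not permanent. -/
theorem herbivore_extinction
    (ω : ℝ) (hω : 0 < ω)
    (a b c α β γ ρ R : ℝ → ℝ)
    (ha : Continuous a) (hb : Continuous b) (hc : Continuous c)
    (hα : Continuous α) (hβ : Continuous β) (hγ : Continuous γ)
    (hρ : Continuous ρ) (hR : Continuous R)
    (hapos : ∀ t, 0 < a t) (hbpos : ∀ t, 0 < b t) (hcpos : ∀ t, 0 < c t)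
    (hαpos : ∀ t, 0 < α t) (hβpos : ∀ t, 0 < β t) (hγpos : ∀ t, 0 < γ t)
    (hρpos : ∀ t, 0 < ρ t) (hRpos : ∀ t, 0 < R t)
    (haper : ∀ t, a (t + ω) = a t) (hbper : ∀ t, b (t + ω) = b t)
    (hcper : ∀ t, c (t + ω) = c t) (hαper : ∀ t, α (t + ω) = α t)
    (hβper : ∀ t, β (t + ω) = β t) (hγper : ∀ t, γ (t + ω) = γ t)
    (hρper : ∀ t, ρ (t + ω) = ρ t) (hRper : ∀ t, R (t + ω) = R t)
    (vstar : ℝ → ℝ)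
    (hvstar_pos : ∀ t, 0 < vstar t)
    (hvstar_per : ∀ t, vstar (t + ω) = vstar t)
    (hvstar_sol : ∀ t, HasDerivAt vstar (vstar t * (a t - b t * vstar t)) t)
    (hvstar_dom : ∀ t, ρ t < vstar t)
    (hex : ∃ v h : ℝ → ℝ, OwenSmithSolution a b c α β γ ρ R v h)
    (havg : (1 / ω) * (∫ t in (0:ℝ)..ω,
      (-R t + α t * (vstar t - ρ t) / (β t + vstar t)
        - γ t * β t / (vstar t - ρ t))) ≤ 0) :
    (∀ v h : ℝ → ℝ, OwenSmithSolution a b c α β γ ρ R v h →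
      Tendsto h atTop (nhds 0)) ∧
    ¬ OwenSmithPermanent a b c α β γ ρ R :=
  herbivore_extinction_general ω hω a b c α β γ ρ R hb hα hβ hγ hρ hR hbpos hcpos hαpos hβpos hγpos
    hρpos hbper hαper hβper hγper hρper hRper vstar hvstar_pos hvstar_per hvstar_sol hvstar_dom hex
    havg
end
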